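/- Let $\kappa_0>2$, $0<\epsilon\le\alpha<1$, $0<\kappa<\kappa_0$, $a=8(\kappa+1)/\alpha$, $b=128(\kappa_0+1)/\epsilon$, and for $0\le\rho<r$ set $\Phi(r)=e^{ar^{\alpha}}/(r^{2\kappa+2}-\rho^{2\kappa+2})$ and $\Psi(r)=(1-br^{\epsilon})e^{ar^{\alpha}}/(r^{2\kappa+2}-\rho^{2\kappa+2})$. Then there is $r_0=r_0(\kappa_0,\epsilon)>0$ such that for all $0\le\rho<r<r_0$ with $\rho/r\le 1/\sqrt{2}$ one has $\Phi'(r)/(1-r^{\alpha})-\Psi'(r)\ge -\,(2\kappa+2-\epsilon/4)\,b\,\Phi(r)\,r^{2\kappa+1+\epsilon}/(r^{2\kappa+2}-\rho^{2\kappa+2})$. -/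

import Mathlib

/-!
Write `X = r^α`, `Y = r^ε`, `q = 2κ+2` and `w = r^q / (r^q - ρ^q)`, so that `w ≤ 2` when
`ρ/r ≤ 1/√2`. Then `r Φ'/Φ = aαX - qw` and `Ψ = (1 - bY) Φ`, hence
`Φ'/(1-X) - Ψ'` plus the right-hand side of the claim equals `Φ/r` times
`(aαX - qw)(X/(1-X) + bY) + bεY + (q - ε/4) b w Y`.
The `aα`-terms are nonnegative, and once `X ≤ Y ≤ 1/2` the rest is at least
`bεY/2 - 4qY ≥ 0`, because `bε = 128(κ₀+1) ≥ 8q`.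
-/

/-- `Φ(r) = e^{a r^α} / (r^{2κ+2} - ρ^{2κ+2})`. -/
noncomputable def Phi (a α κ ρ : ℝ) (r : ℝ) : ℝ :=
  Real.exp (a * r ^ α) / (r ^ (2 * κ + 2) - ρ ^ (2 * κ + 2))

/-- `Ψ(r) = (1 - b r^ε) e^{a r^α} / (r^{2κ+2} - ρ^{2κ+2})`. -/
noncomputable def Psi (a b α ε κ ρ : ℝ) (r : ℝ) : ℝ :=
  (1 - b * r ^ ε) * Real.exp (a * r ^ α) / (r ^ (2 * κ + 2) - ρ ^ (2 * κ + 2))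

open Real

lemma Psi_eq_mul_Phi (a b α ε κ ρ : ℝ) :
    Psi a b α ε κ ρ = fun r => (1 - b * r ^ ε) * Phi a α κ ρ r := by
  ext r
  simp only [Psi, Phi, mul_div_assoc]

lemma hasDerivAt_Phi (a α κ ρ : ℝ) {r : ℝ} (hr : 0 < r)
    (hD : r ^ (2 * κ + 2) - ρ ^ (2 * κ + 2) ≠ 0) :
    HasDerivAt (Phi a α κ ρ)
      (Phi a α κ ρ r * (a * α * r ^ α
        - (2 * κ + 2) * r ^ (2 * κ + 2) / (r ^ (2 * κ + 2) - ρ ^ (2 * κ + 2))) / r) r := by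
  have hexp : HasDerivAt (fun s => exp (a * s ^ α))
      (exp (a * r ^ α) * (a * (α * r ^ (α - 1)))) r :=
    ((hasDerivAt_rpow_const (Or.inl hr.ne')).const_mul a).exp
  have hden : HasDerivAt (fun s => s ^ (2 * κ + 2) - ρ ^ (2 * κ + 2))
      ((2 * κ + 2) * r ^ (2 * κ + 2 - 1)) r :=
    (hasDerivAt_rpow_const (Or.inl hr.ne')).sub_const _
  refine (hexp.div hden hD).congr_deriv ?_
  rw [rpow_sub_one hr.ne', rpow_sub_one hr.ne', Phi]
  generalize r ^ (2 * κ + 2) - ρ ^ (2 * κ + 2) = D at hD ⊢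
  field_simp

lemma hasDerivAt_Psi (a b α ε κ ρ : ℝ) {r : ℝ} (hr : 0 < r)
    (hD : r ^ (2 * κ + 2) - ρ ^ (2 * κ + 2) ≠ 0) :
    HasDerivAt (Psi a b α ε κ ρ)
      (Phi a α κ ρ r * (-(b * ε * r ^ ε) + (1 - b * r ^ ε) * (a * α * r ^ α
        - (2 * κ + 2) * r ^ (2 * κ + 2) / (r ^ (2 * κ + 2) - ρ ^ (2 * κ + 2)))) / r) r := by
  rw [Psi_eq_mul_Phi]
  have hpow : HasDerivAt (fun s => 1 - b * s ^ ε) (-(b * (ε * r ^ (ε - 1)))) r :=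
    ((hasDerivAt_rpow_const (Or.inl hr.ne')).const_mul b).const_sub 1
  refine (hpow.mul (hasDerivAt_Phi a α κ ρ hr hD)).congr_deriv ?_
  rw [rpow_sub_one hr.ne']
  field_simp

lemma rpow_le_half_rpow_of_div_le_inv_sqrt_two {ρ r p : ℝ} (hρ : 0 ≤ ρ) (hr : 0 < r)
    (hp : 2 ≤ p) (h : ρ / r ≤ 1 / √2) : ρ ^ p ≤ r ^ p / 2 := by
  have hρr : ρ / r ≤ 1 :=
    h.trans ((div_le_one (by positivity)).2 (one_le_sqrt.2 one_le_two))
  have hq : (ρ / r) ^ p ≤ 1 / 2 := calc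
    (ρ / r) ^ p ≤ (ρ / r) ^ (2 : ℝ) :=
      rpow_le_rpow_of_exponent_ge' (by positivity) hρr (by norm_num) hp
    _ ≤ (1 / √2) ^ (2 : ℝ) := rpow_le_rpow (by positivity) h (by norm_num)
    _ = 1 / 2 := by rw [rpow_two, div_pow, sq_sqrt zero_le_two, one_pow]
  rw [div_rpow hρ hr.le, div_le_iff₀ (by positivity)] at hq
  linarith

lemma combination_nonneg {A b ε q w X Y : ℝ} (hA : 0 ≤ A) (hb : 0 ≤ b) (hq : 0 ≤ q)
    (hw : w ≤ 2) (hX : 0 ≤ X) (hXY : X ≤ Y) (hY : Y ≤ 1 / 2)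
    (hqb : 8 * q ≤ ε * b) :
    0 ≤ (A * X - q * w) * (X / (1 - X) + b * Y) + b * ε * Y + (q - ε / 4) * b * w * Y := by
  have h1X : 0 < 1 - X := by linarith
  have hfrac : X / (1 - X) ≤ 2 * Y := by
    rw [div_le_iff₀ h1X]; nlinarith
  have hεb : 0 ≤ ε * b := by linarith
  have hpos : 0 ≤ A * X * (X / (1 - X) + b * Y) :=
    mul_nonneg (mul_nonneg hA hX)
      (add_nonneg (div_nonneg hX h1X.le) (mul_nonneg hb (hX.trans hXY)))
  have hqw : q * w * (X / (1 - X)) ≤ 4 * q * Y := by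
    have := mul_le_mul hw hfrac (div_nonneg hX h1X.le) zero_le_two
    nlinarith
  nlinarith [mul_nonneg (mul_nonneg hεb (hX.trans hXY)) (sub_nonneg.2 hw),
    mul_nonneg (sub_nonneg.2 hqb) (hX.trans hXY)]

lemma neg_le_deriv_Phi_div_sub_deriv_Psi {a b α ε κ ρ r : ℝ} (hr : 0 < r) (hκ : -1 ≤ κ)
    (hρ : ρ ^ (2 * κ + 2) ≤ r ^ (2 * κ + 2) / 2) (haα : 0 ≤ a * α) (hb : 0 ≤ b)
    (hXY : r ^ α ≤ r ^ ε) (hY : r ^ ε ≤ 1 / 2) (hbε : 8 * (2 * κ + 2) ≤ ε * b) :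
    -((2 * κ + 2 - ε / 4) * b * Phi a α κ ρ r * r ^ (2 * κ + 1 + ε) /
        (r ^ (2 * κ + 2) - ρ ^ (2 * κ + 2)))
      ≤ deriv (Phi a α κ ρ) r / (1 - r ^ α) - deriv (Psi a b α ε κ ρ) r := by
  have hZ : 0 < r ^ (2 * κ + 2) := rpow_pos_of_pos hr _
  have hD : 0 < r ^ (2 * κ + 2) - ρ ^ (2 * κ + 2) := by linarith
  have hX : 0 < r ^ α := rpow_pos_of_pos hr _
  have hP : 0 < Phi a α κ ρ r := div_pos (exp_pos _) hD
  have hexp : r ^ (2 * κ + 1 + ε) = r ^ (2 * κ + 2) * r ^ ε / r := by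
    rw [show 2 * κ + 1 + ε = 2 * κ + 2 + ε - 1 by ring, rpow_sub_one hr.ne', rpow_add hr]
  rw [(hasDerivAt_Phi a α κ ρ hr hD.ne').deriv, (hasDerivAt_Psi a b α ε κ ρ hr hD.ne').deriv,
    hexp, ← sub_nonneg]
  have hw : r ^ (2 * κ + 2) / (r ^ (2 * κ + 2) - ρ ^ (2 * κ + 2)) ≤ 2 := by
    rw [div_le_iff₀ hD]; linarith
  have key := combination_nonneg haα hb (by linarith) hw hX.le hXY hY hbε
  have h1X : 1 - r ^ α ≠ 0 := by linarith
  refine (mul_nonneg (div_pos hP hr).le key).trans_eq ?_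
  generalize r ^ (2 * κ + 2) - ρ ^ (2 * κ + 2) = D at hD ⊢
  field_simp
  ring

theorem stmt_1_general (κ0 ε : ℝ) (hε : 0 < ε) :
    ∃ r0 : ℝ, 0 < r0 ∧
      ∀ κ α ρ : ℝ, ε ≤ α → α < 1 → 0 < κ → κ < κ0 → 0 ≤ ρ →
        ∀ r : ℝ, ρ < r → r < r0 → ρ / r ≤ 1 / Real.sqrt 2 →
          -((2 * κ + 2 - ε / 4) * (128 * (κ0 + 1) / ε) *
              Phi (8 * (κ + 1) / α) α κ ρ r * r ^ (2 * κ + 1 + ε) /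
              (r ^ (2 * κ + 2) - ρ ^ (2 * κ + 2)))
            ≤ deriv (Phi (8 * (κ + 1) / α) α κ ρ) r / (1 - r ^ α)
              - deriv (Psi (8 * (κ + 1) / α) (128 * (κ0 + 1) / ε) α ε κ ρ) r := by
  refine ⟨min 1 ((1 / 2) ^ ε⁻¹), lt_min one_pos (by positivity), ?_⟩
  intro κ α ρ hεα _ hκ hκκ0 hρ r hρr hrr0 hρr_sqrt
  have hr : 0 < r := hρ.trans_lt hρr
  have hα : 0 < α := hε.trans_le hεα
  have hrε : r ^ ε < 1 / 2 :=
    (lt_rpow_inv_iff_of_pos hr.le (by norm_num) hε).1 (hrr0.trans_le (min_le_right _ _))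
  refine neg_le_deriv_Phi_div_sub_deriv_Psi hr (by linarith)
    (rpow_le_half_rpow_of_div_le_inv_sqrt_two hρ hr (by linarith) hρr_sqrt)
    (by rw [div_mul_cancel₀ _ hα.ne']; linarith) (div_nonneg (by linarith) hε.le)
    (rpow_le_rpow_of_exponent_ge hr (hrr0.trans_le (min_le_left _ _)).le hεα) hrε.le ?_
  rw [mul_div_cancel₀ _ hε.ne']
  linarith

/-- There is `r0 = r0(κ0, ε) > 0` such that for all `0 ≤ ρ < r < r0` with `ρ/r ≤ 1/√2`,
`Φ'(r)/(1 - r^α) - Ψ'(r) ≥ -(2κ+2-ε/4) b Φ(r) r^{2κ+1+ε} / (r^{2κ+2} - ρ^{2κ+2})`,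
where `a = 8(κ+1)/α` and `b = 128(κ0+1)/ε`. -/
theorem stmt_1 (κ0 ε : ℝ) (hκ0 : 2 < κ0) (hε : 0 < ε) :
    ∃ r0 : ℝ, 0 < r0 ∧
      ∀ κ α ρ : ℝ, ε ≤ α → α < 1 → 0 < κ → κ < κ0 → 0 ≤ ρ →
        ∀ r : ℝ, ρ < r → r < r0 → ρ / r ≤ 1 / Real.sqrt 2 →
          -((2 * κ + 2 - ε / 4) * (128 * (κ0 + 1) / ε) *
              Phi (8 * (κ + 1) / α) α κ ρ r * r ^ (2 * κ + 1 + ε) /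
              (r ^ (2 * κ + 2) - ρ ^ (2 * κ + 2)))
            ≤ deriv (Phi (8 * (κ + 1) / α) α κ ρ) r / (1 - r ^ α)
              - deriv (Psi (8 * (κ + 1) / α) (128 * (κ0 + 1) / ε) α ε κ ρ) r :=
  stmt_1_general κ0 ε hε
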